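/- arXiv:0710.0155 — 3 statements merged into one kernel-verified Lean document; each statement's English description precedes it below -/
import Mathlib

section
/- There exists a subset E of 2^ω × 2^ω which is the union of a closed set and an open set (i.e., the complement of a difference of two open sets), all of whose vertical sections E_x = {y : (x,y) ∈ E} are clopen in 2^ω, yet E is not a countable union of rectangles of the form F × S with F a closed subset of 2^ω and S an arbitrary subset of 2^ω. -/
open Filter Topology Set Classical

noncomputable section
open scoped Classical

/-- A set is Fσ if it is a countable union of closed sets. -/
def IsFsigma {X : Type*} [TopologicalSpace X] (s : Set X) : Prop :=
  ∃ F : ℕ → Set X, (∀ n, IsClosed (F n)) ∧ s = ⋃ n, F n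

/-- A function is Baire class one if the preimage of every open set is Fσ. -/
def BaireClassOneFn {X Y : Type*} [TopologicalSpace X] [TopologicalSpace Y] (f : X → Y) : Prop :=
  ∀ U : Set Y, IsOpen U → IsFsigma (f ⁻¹' U)

/-- A countable basis `(W m)` is good if for every open `U` and `x ∈ U` there is `m₀`
such that for all `m ≥ m₀`, `x ∈ W m` implies `W m ⊆ U`. -/
def IsGoodBasis {X : Type*} [TopologicalSpace X] (W : ℕ → Set X) : Prop :=
  TopologicalSpace.IsTopologicalBasis (Set.range W) ∧
  ∀ U : Set X, IsOpen U → ∀ x ∈ U, ∃ m₀, ∀ m ≥ m₀, x ∈ W m → W m ⊆ U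

/-- The path to `x` based on the dense sequence `D`, relative to the good basis `W`. -/
noncomputable def pathSeq {X : Type*} (W : ℕ → Set X) (D : ℕ → X) (x : X) : ℕ → X
  | 0 => D 0
  | n + 1 =>
    if x = pathSeq W D x n then pathSeq W D x n
    else D (sInf {p | ∃ m, x ∈ W m ∧ D p ∈ W m ∧ ∀ k, k ≤ n → pathSeq W D x k ∉ W m})
  termination_by n => n
  decreasing_by all_goals omega

/-- `f` is recoverable with respect to `D` (and the good basis `W`). -/
def RecoverableWith {X Y : Type*} [TopologicalSpace Y] (W : ℕ → Set X) (D : ℕ → X)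
    (f : X → Y) : Prop :=
  ∀ x : X, Tendsto (fun n => f (pathSeq W D x n)) atTop (𝓝 (f x))

/-!
The complement `E` of the set of pairs `(x, y)` such that `y` splits off `x` exactly at the last
`1` of `x` works. Splitting at `k` is clopen and splitting at distinct places is incompatible, so
`E` is closed ∪ open and its sections are clopen. If `E = ⋃ Fₙ × Sₙ` with `Fₙ` closed, then every
`x` with infinitely many zeros lies on the frontier of some `Fₙ`: `(x, x) ∈ Fₙ × Sₙ`, while the
points `x'` with `(x', x) ∉ E` (obtained by truncating `x` and appending a `1` at a zero of `x`)
converge to `x` and avoid `Fₙ`. This covers a comeagre set by a meagre one, contradicting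
the Baire category theorem.
-/

open Function

section ClosedUnionOpen

variable {ι X : Type*} [TopologicalSpace X]

theorem exists_compl_iUnion_inter_eq_closed_union_open {A L : ι → Set X}
    (hA : ∀ i, IsOpen (A i)) (hL : ∀ i, IsClosed (L i)) (hdisj : Pairwise (Disjoint on A)) :
    ∃ C U : Set X, IsClosed C ∧ IsOpen U ∧ (⋃ i, A i ∩ L i)ᶜ = C ∪ U := by
  refine ⟨(⋃ i, A i)ᶜ, ⋃ i, A i ∩ (L i)ᶜ, (isOpen_iUnion hA).isClosed_compl,
    isOpen_iUnion fun i => (hA i).inter (hL i).isOpen_compl, ?_⟩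
  ext x
  simp only [mem_compl_iff, mem_iUnion, mem_inter_iff, mem_union, not_exists, not_and]
  constructor
  · intro h
    by_cases hx : ∃ i, x ∈ A i
    · obtain ⟨i, hi⟩ := hx
      exact Or.inr ⟨i, hi, h i hi⟩
    · exact Or.inl (not_exists.1 hx)
  · rintro (h | ⟨i, hi, hLi⟩) j hj
    · exact absurd hj (h j)
    · obtain rfl : i = j := hdisj.eq (not_disjoint_iff.2 ⟨x, hi, hj⟩)
      exact hLi

theorem isClopen_setOf_mk_mem_iUnion_inter_fst_preimage {Y : Type*} [TopologicalSpace Y]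
    {A : ι → Set (X × Y)} {M : ι → Set X} (hA : ∀ i, IsClopen (A i))
    (hM : Pairwise (Disjoint on M)) (x : X) :
    IsClopen {y | (x, y) ∈ ⋃ i, A i ∩ Prod.fst ⁻¹' M i} := by
  by_cases hx : ∃ i, x ∈ M i
  · obtain ⟨i, hi⟩ := hx
    have hsection : {y | (x, y) ∈ ⋃ j, A j ∩ Prod.fst ⁻¹' M j} = Prod.mk x ⁻¹' A i := by
      ext y
      simp only [mem_ofPred_eq, mem_iUnion, mem_inter_iff, mem_preimage]
      refine ⟨fun ⟨j, hj, hxj⟩ => ?_, fun h => ⟨i, h, hi⟩⟩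
      obtain rfl : i = j := hM.eq (not_disjoint_iff.2 ⟨x, hi, hxj⟩)
      exact hj
    rw [hsection]
    exact (hA i).preimage (Continuous.prodMk_right x)
  · have hsection : {y | (x, y) ∈ ⋃ i, A i ∩ Prod.fst ⁻¹' M i} = ∅ :=
      eq_empty_of_forall_notMem fun y hy =>
        hx (by simpa only [mem_ofPred_eq, mem_iUnion, mem_inter_iff, mem_preimage] using
          (mem_iUnion.1 hy).imp fun _ h => h.2)
    rw [hsection]
    exact isClopen_empty

end ClosedUnionOpen

theorem not_exists_iUnion_isClosed_prod_eq {X : Type*} [TopologicalSpace X] [BaireSpace X]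
    [Nonempty X] {E : Set (X × X)} {G : Set X} (hG : G ∈ residual X)
    (hdiag : ∀ x ∈ G, (x, x) ∈ E) (hclosure : ∀ x ∈ G, x ∈ closure {x' | (x', x) ∉ E}) :
    ¬ ∃ (F S : ℕ → Set X), (∀ n, IsClosed (F n)) ∧ E = ⋃ n, F n ×ˢ S n := by
  rintro ⟨F, S, hF, rfl⟩
  have hcover : G ⊆ ⋃ n, frontier (F n) := by
    intro x hx
    obtain ⟨n, hxF, hxS⟩ : ∃ n, x ∈ F n ∧ x ∈ S n := by simpa using hdiag x hx
    have hoff : {x' | (x', x) ∉ ⋃ n, F n ×ˢ S n} ⊆ (F n)ᶜ :=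
      fun x' hx' hx'F => hx' (mem_iUnion.2 ⟨n, hx'F, hxS⟩)
    have hx' : x ∈ closure (F n)ᶜ := closure_mono hoff (hclosure x hx)
    rw [closure_compl] at hx'
    exact mem_iUnion.2 ⟨n, subset_closure hxF, hx'⟩
  have hmeagre : IsMeagre (⋃ n, frontier (F n)) := isMeagre_iUnion fun n =>
    (isClosed_frontier.isNowhereDense_iff.2 (interior_frontier (hF n))).isMeagre
  have hGc : IsMeagre Gᶜ := by rwa [IsMeagre, compl_compl]
  refine not_isMeagre_of_isOpen isOpen_univ univ_nonempty ((hGc.union hmeagre).mono ?_)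
  intro x _
  by_cases hx : x ∈ G
  exacts [Or.inr (hcover hx), Or.inl hx]

theorem tendsto_of_forall_lt_apply_eq {α : Type*} [TopologicalSpace α] {x : ℕ → α}
    {y : ℕ → ℕ → α} (h : ∀ n j, j < n → y n j = x j) : Tendsto y atTop (𝓝 x) :=
  tendsto_pi_nhds.2 fun j => tendsto_const_nhds.congr' <|
    (eventually_gt_atTop j).mono fun n hn => (h n j hn).symm

theorem setOf_frequently_eq_false_mem_residual :
    {x : ℕ → Bool | ∃ᶠ n in atTop, x n = false} ∈ residual (ℕ → Bool) := by
  have hcompl : {x : ℕ → Bool | ∃ᶠ n in atTop, x n = false}ᶜ =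
      ⋃ p, {x | ∀ n, p ≤ n → x n = true} := by
    ext x
    simp [Filter.not_frequently, eventually_atTop]
  suffices IsMeagre {x : ℕ → Bool | ∃ᶠ n in atTop, x n = false}ᶜ by
    rwa [IsMeagre, compl_compl] at this
  rw [hcompl]
  refine isMeagre_iUnion fun p => IsNowhereDense.isMeagre
    (isClosed_isNowhereDense_iff_compl.2 ⟨?_, fun x => ?_⟩).2
  · simp only [isOpen_compl_iff, ofPred_forall]
    exact isClosed_iInter fun n => isClosed_iInter fun _ =>
      isClosed_eq (continuous_apply n) continuous_const
  · refine mem_closure_of_tendsto (tendsto_of_forall_lt_apply_eq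
      (y := fun n j => if j < n then x j else false) (by simp +contextual)) ?_
    exact (eventually_ge_atTop p).mono fun n hn h => by simpa using h n hn

section SplitAt

variable {α : Type*}

def splitAt (k : ℕ) : Set ((ℕ → α) × (ℕ → α)) :=
  {p | (∀ j < k, p.1 j = p.2 j) ∧ p.1 k ≠ p.2 k}

theorem isClopen_splitAt [TopologicalSpace α] [DiscreteTopology α] (k : ℕ) :
    IsClopen (splitAt (α := α) k) := by
  have hEq : ∀ j, IsClopen {p : (ℕ → α) × (ℕ → α) | p.1 j = p.2 j} := fun j =>
    (isClopen_discrete (diagonal α)).preimage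
      (f := fun p : (ℕ → α) × (ℕ → α) => (p.1 j, p.2 j)) (by fun_prop)
  have hsplit :
      splitAt (α := α) k = (⋂ j ∈ Iio k, {p | p.1 j = p.2 j}) ∩ {p | p.1 k = p.2 k}ᶜ := by
    ext p
    simp [splitAt]
  rw [hsplit]
  exact ((finite_Iio k).isClopen_biInter fun j _ => hEq j).inter (hEq k).compl

theorem pairwise_disjoint_splitAt : Pairwise (Disjoint on splitAt (α := α)) := by
  intro i j hij
  rw [Function.onFun, Set.disjoint_left]
  rintro p ⟨hi, hi'⟩ ⟨hj, hj'⟩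
  rcases hij.lt_or_gt with h | h
  exacts [hi' (hj i h), hj' (hi j h)]

end SplitAt

def lastTrueAt (k : ℕ) : Set (ℕ → Bool) :=
  {x | x k = true ∧ ∀ j, k < j → x j = false}

theorem isClosed_lastTrueAt (k : ℕ) : IsClosed (lastTrueAt k) := by
  simp only [lastTrueAt, ofPred_and, ofPred_forall]
  exact (isClosed_eq (continuous_apply k) continuous_const).inter
    (isClosed_iInter fun j => isClosed_iInter fun _ =>
      isClosed_eq (continuous_apply j) continuous_const)

theorem pairwise_disjoint_lastTrueAt : Pairwise (Disjoint on lastTrueAt) := by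
  intro i j hij
  rw [Function.onFun, Set.disjoint_left]
  rintro x ⟨hi, hi'⟩ ⟨hj, hj'⟩
  rcases hij.lt_or_gt with h | h
  · simp [hi' j h] at hj
  · simp [hj' i h] at hi

def splitAtLastTrue : Set ((ℕ → Bool) × (ℕ → Bool)) :=
  ⋃ k, splitAt k ∩ Prod.fst ⁻¹' lastTrueAt k

theorem mem_closure_setOf_splitAtLastTrue {x : ℕ → Bool} (hx : ∃ᶠ n in atTop, x n = false) :
    x ∈ closure {x' | (x', x) ∈ splitAtLastTrue} := by
  set y : ℕ → ℕ → Bool := fun n j => if j < n then x j else decide (j = n)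
  have hy : Tendsto y atTop (𝓝 x) := tendsto_of_forall_lt_apply_eq (by simp +contextual [y])
  refine mem_closure_of_frequently_of_tendsto (hx.mono fun n hn => ?_) hy
  refine mem_iUnion.2 ⟨n, ⟨fun j hj => by simp [y, hj], by simp [y, hn]⟩, by simp [y], ?_⟩
  intro j hj
  simp [y, hj.ne', hj.not_gt]

/-- There is a subset `E` of `2^ω × 2^ω` which is the union of a closed set and an open set,
all of whose vertical sections are clopen, but which is not a countable union of rectangles
`F × S` with `F` closed and `S` arbitrary. -/
theorem exists_closedUnionOpen_clopenSections_not_sigmaClosedRectangles :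
    ∃ E : Set ((ℕ → Bool) × (ℕ → Bool)),
      (∃ (C U : Set ((ℕ → Bool) × (ℕ → Bool))), IsClosed C ∧ IsOpen U ∧ E = C ∪ U) ∧
      (∀ x : ℕ → Bool, IsClopen {y | (x, y) ∈ E}) ∧
      ¬ (∃ (F : ℕ → Set (ℕ → Bool)) (S : ℕ → Set (ℕ → Bool)),
          (∀ n, IsClosed (F n)) ∧ E = ⋃ n, F n ×ˢ S n) := by
  refine ⟨splitAtLastTrueᶜ, ?_, fun x => ?_, ?_⟩
  · exact exists_compl_iUnion_inter_eq_closed_union_open (fun k => (isClopen_splitAt k).isOpen)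
      (fun k => (isClosed_lastTrueAt k).preimage continuous_fst) pairwise_disjoint_splitAt
  · exact (isClopen_setOf_mk_mem_iUnion_inter_fst_preimage isClopen_splitAt
      pairwise_disjoint_lastTrueAt x).compl
  · refine not_exists_iUnion_isClosed_prod_eq setOf_frequently_eq_false_mem_residual
      (fun x _ h => ?_) fun x hx => ?_
    · obtain ⟨k, ⟨-, hk⟩, -⟩ := mem_iUnion.1 h
      exact hk rfl
    · simpa only [mem_compl_iff, not_not] using mem_closure_setOf_splitAtLastTrue hx
end
end

section
/- Let X be a separable metrizable space and A a second-countable topological space. Then (i) every closed subset F of X × A all of whose vertical sections F_x are open in A is a countable union of rectangles C × U with C closed in X and U open in A; and (ii) if moreover A is zero-dimensional (has a basis of clopen sets), then every subset of X × A of the form U \ V with U, V open (a D₂(Σ⁰₁) set), all of whose vertical sections are open in A, is a countable union of rectangles C × W with C closed in X and W clopen in A. -/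
open Filter Topology Set Classical

noncomputable section
open scoped Classical

lemma exists_open_seq_basis' (A : Type*) [TopologicalSpace A] [SecondCountableTopology A] :
    ∃ U : ℕ → Set A, (∀ n, IsOpen (U n)) ∧
      ∀ s : Set A, IsOpen s → ∀ a ∈ s, ∃ n, a ∈ U n ∧ U n ⊆ s := by
  have hc : (insert (∅ : Set A) (TopologicalSpace.countableBasis A)).Countable :=
    (TopologicalSpace.countable_countableBasis A).insert _
  obtain ⟨U, hU⟩ := hc.exists_eq_range ⟨∅, mem_insert _ _⟩
  refine ⟨U, ?_, ?_⟩
  · intro n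
    have : U n ∈ insert (∅ : Set A) (TopologicalSpace.countableBasis A) := by
      rw [hU]; exact mem_range_self n
    rcases this with h | h
    · simp [h]
    · exact TopologicalSpace.isOpen_of_mem_countableBasis h
  · intro s hs a ha
    obtain ⟨t, ht, hat, hts⟩ :=
      (TopologicalSpace.isBasis_countableBasis A).exists_subset_of_mem_open ha hs
    have : t ∈ range U := by rw [← hU]; exact mem_insert_of_mem _ ht
    obtain ⟨n, rfl⟩ := this
    exact ⟨n, hat, hts⟩

lemma exists_clopen_seq_basis' (A : Type*) [TopologicalSpace A] [SecondCountableTopology A]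
    (h : TopologicalSpace.IsTopologicalBasis {s : Set A | IsClopen s}) :
    ∃ W : ℕ → Set A, (∀ n, IsClopen (W n)) ∧
      ∀ s : Set A, IsOpen s → ∀ a ∈ s, ∃ n, a ∈ W n ∧ W n ⊆ s := by
  obtain ⟨U, hUo, hUb⟩ := exists_open_seq_basis' A
  have key : ∀ p : ℕ × ℕ, ∃ w : Set A, IsClopen w ∧
      ((∃ w' : Set A, IsClopen w' ∧ U p.1 ⊆ w' ∧ w' ⊆ U p.2) → U p.1 ⊆ w ∧ w ⊆ U p.2) := by
    intro p
    by_cases hp : ∃ w' : Set A, IsClopen w' ∧ U p.1 ⊆ w' ∧ w' ⊆ U p.2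
    · obtain ⟨w, hw, h1, h2⟩ := hp
      exact ⟨w, hw, fun _ => ⟨h1, h2⟩⟩
    · exact ⟨∅, isClopen_empty, fun hc => absurd hc hp⟩
  choose w hw hw2 using key
  refine ⟨fun n => w ((Denumerable.eqv (ℕ × ℕ)).symm n), fun n => hw _, ?_⟩
  intro s hs a ha
  obtain ⟨m, ham, hms⟩ := hUb s hs a ha
  obtain ⟨t, ht, hat, htm⟩ := h.exists_subset_of_mem_open ham (hUo m)
  obtain ⟨n, han, hnt⟩ := hUb t ht.isOpen a hat
  have hex : ∃ w' : Set A, IsClopen w' ∧ U n ⊆ w' ∧ w' ⊆ U m := ⟨t, ht, hnt, htm⟩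
  obtain ⟨h1, h2⟩ := hw2 (n, m) hex
  refine ⟨(Denumerable.eqv (ℕ × ℕ)) (n, m), ?_, ?_⟩
  · simpa using h1 han
  · simpa using h2.trans hms

/-- (i) In `X × A` with `A` second countable, every closed set with open vertical sections is
a countable union of rectangles closed × open ; (ii) if moreover `A` is zero-dimensional,
every difference of two open sets with open vertical sections is a countable union of
rectangles closed × clopen. -/
theorem closed_openSections_sigmaRectangles {X A : Type*}
    [TopologicalSpace X] [TopologicalSpace.SeparableSpace X] [TopologicalSpace.MetrizableSpace X]
    [TopologicalSpace A] [SecondCountableTopology A] :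
    (∀ F : Set (X × A), IsClosed F → (∀ x : X, IsOpen {a | (x, a) ∈ F}) →
      ∃ (C : ℕ → Set X) (U : ℕ → Set A), (∀ n, IsClosed (C n)) ∧ (∀ n, IsOpen (U n)) ∧
        F = ⋃ n, C n ×ˢ U n) ∧
    (TopologicalSpace.IsTopologicalBasis {s : Set A | IsClopen s} →
      ∀ U V : Set (X × A), IsOpen U → IsOpen V → (∀ x : X, IsOpen {a | (x, a) ∈ U \ V}) →
        ∃ (C : ℕ → Set X) (W : ℕ → Set A), (∀ n, IsClosed (C n)) ∧ (∀ n, IsClopen (W n)) ∧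
          U \ V = ⋃ n, C n ×ˢ W n) := by
  constructor
  · -- part (i)
    intro F hF hsec
    obtain ⟨U, hUo, hUb⟩ := exists_open_seq_basis' A
    refine ⟨fun n => ⋂ a : A, ⋂ _ : a ∈ U n, (fun x => (x, a)) ⁻¹' F, U, ?_, hUo, ?_⟩
    · intro n
      exact isClosed_iInter fun a => isClosed_iInter fun _ =>
        hF.preimage (continuous_id.prodMk continuous_const)
    · ext ⟨x, a⟩
      simp only [mem_iUnion, mem_prod, mem_iInter, mem_preimage]
      constructor
      · intro hxa
        obtain ⟨n, han, hns⟩ := hUb _ (hsec x) a hxa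
        exact ⟨n, fun a' ha' => hns ha', han⟩
      · rintro ⟨n, hC, ha⟩
        exact hC a ha
  · -- part (ii)
    intro hbasis U V hU hV hsec
    letI : MetricSpace X := TopologicalSpace.metrizableSpaceMetric X
    haveI : SecondCountableTopology X := UniformSpace.secondCountable_of_separable X
    obtain ⟨B, hBo, hBb⟩ := exists_open_seq_basis' X
    obtain ⟨W, hWc, hWb⟩ := exists_clopen_seq_basis' A hbasis
    have hFs : ∀ n, ∃ F : ℕ → Set X, (∀ j, IsClosed (F j)) ∧ (∀ j, F j ⊆ B n) ∧
        (⋃ j, F j) = B n ∧ Monotone F := fun n => (hBo n).exists_iUnion_isClosed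
    choose F hFc hFsub hFun _ using hFs
    -- index by triples (n,k,j)
    set e := Denumerable.eqv (ℕ × ℕ × ℕ) with he
    set C : ℕ × ℕ × ℕ → Set X := fun p =>
      if B p.1 ×ˢ W p.2.1 ⊆ U then
        F p.1 p.2.2 ∩ ⋂ a : A, ⋂ _ : a ∈ W p.2.1, (fun x => (x, a)) ⁻¹' Vᶜ
      else ∅ with hC
    refine ⟨fun m => C (e.symm m), fun m => W (e.symm m).2.1, ?_, fun m => hWc _, ?_⟩
    · intro m
      rw [hC]
      dsimp only
      split
      · exact (hFc _ _).inter (isClosed_iInter fun a => isClosed_iInter fun _ =>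
          hV.isClosed_compl.preimage (continuous_id.prodMk continuous_const))
      · exact isClosed_empty
    · ext ⟨x, a⟩
      simp only [mem_iUnion, mem_prod]
      constructor
      · rintro ⟨hxU, hxV⟩
        obtain ⟨u, v, hu, hv, hxu, hav, huv⟩ := isOpen_prod_iff.1 hU x a hxU
        obtain ⟨n, hxn, hnu⟩ := hBb u hu x hxu
        have hvs : IsOpen (v ∩ {a' | (x, a') ∈ U \ V}) := hv.inter (hsec x)
        obtain ⟨k, hak, hks⟩ := hWb _ hvs a ⟨hav, hxU, hxV⟩
        obtain ⟨j, hxj⟩ : ∃ j, x ∈ F n j := by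
          rw [← mem_iUnion, hFun]; exact hxn
        refine ⟨e (n, k, j), ?_, by simpa using hak⟩
        have hcond : B n ×ˢ W k ⊆ U := by
          intro ⟨x', a'⟩ ⟨hx', ha'⟩
          exact huv ⟨hnu hx', (hks ha').1⟩
        simp only [hC, Equiv.symm_apply_apply, hcond, if_pos]
        refine ⟨hxj, ?_⟩
        simp only [mem_iInter, mem_preimage, mem_compl_iff]
        intro a' ha'
        exact (hks ha').2.2
      · rintro ⟨m, hxC, haW⟩
        rw [hC] at hxC
        dsimp only at hxC
        split at hxC
        · rename_i hcond
          obtain ⟨hxF, hxV⟩ := hxC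
          simp only [mem_iInter, mem_preimage, mem_compl_iff] at hxV
          exact ⟨hcond ⟨hFsub _ _ hxF, haW⟩, hxV a haW⟩
        · exact absurd hxC (notMem_empty x)
end
end

section
/- There exists a subset E of 2^ω × 2^ω which is the union of a closed set and an open set (i.e., the complement of a difference of two open sets), all of whose vertical sections E_x = {y : (x,y) ∈ E} are clopen in 2^ω, yet E is not a countable union of rectangles of the form F × U with F a closed subset of 2^ω and U an open subset of 2^ω. (One such set is E = (2^ω × {0^ω}) ∪ ∪_p (2^ω \ {ψ(p)}) × N_{0^p 1}, where ψ : ω → P_f is a bijection onto the set P_f of eventually-zero sequences and N_s denotes the basic clopen set of extensions of the finite sequence s.) -/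
/-!
Take `E = (2^ω × {0^ω}) ∪ ⋃ p, (2^ω \ {ψ p}) × N_{0^p 1}` for an injective sequence `ψ` with dense
range (the paper's enumeration of the eventually-zero sequences is one). Its section at `ψ q` is the
complement of `N_{0^q 1}` and every other section is everything. If `E = ⋃ n, F n × U n`, the
sections at `0^ω` show by Baire category that some `F n` with `0^ω ∈ U n` has nonempty interior.
That interior contains `ψ p` for arbitrarily large `p`, and `U n` contains the point of `N_{0^p 1}`
with a single `1` once `p` is large; but `(ψ p, 0^p 1 0^ω) ∉ E`.
-/

open Filter Topology Set Classical

noncomputable section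
open scoped Classical

section

variable {α : Type*} [TopologicalSpace α]

theorem tendsto_update_atTop (x a : ℕ → α) :
    Tendsto (fun n => Function.update x n (a n)) atTop (𝓝 x) := by
  refine tendsto_pi_nhds.2 fun i => tendsto_const_nhds.congr' ?_
  filter_upwards [eventually_gt_atTop i] with n hn
  rw [Function.update_of_ne hn.ne]

instance [Nontrivial α] : PerfectSpace (ℕ → α) := by
  refine perfectSpace_iff_forall_not_isolated.2 fun x => mem_closure_iff_nhdsWithin_neBot.1 ?_
  choose a ha using fun n => exists_ne (x n)
  refine mem_closure_of_tendsto (tendsto_update_atTop x a) (Eventually.of_forall fun n => ?_)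
  simpa [Function.update_eq_self_iff] using ha n

/-- The basic clopen set `N_{0^p 1}`. -/
def firstTrueAt (p : ℕ) : Set (ℕ → Bool) := {y | y p = true ∧ ∀ i < p, y i = false}

theorem isClopen_firstTrueAt (p : ℕ) : IsClopen (firstTrueAt p) := by
  have hcoord : ∀ i b, IsClopen {y : ℕ → Bool | y i = b} := fun i b =>
    (isClopen_discrete {b}).preimage (continuous_apply i)
  simpa only [firstTrueAt, ofPred_and, ofPred_forall, mem_Iio] using
    (hcoord p true).inter ((finite_Iio p).isClopen_biInter fun i _ => hcoord i false)

theorem const_false_notMem_firstTrueAt (p : ℕ) : (fun _ => false) ∉ firstTrueAt p := by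
  simp [firstTrueAt]

theorem eq_of_mem_firstTrueAt {p q : ℕ} {y : ℕ → Bool} (hp : y ∈ firstTrueAt p)
    (hq : y ∈ firstTrueAt q) : p = q := by
  by_contra hne
  rcases Nat.lt_or_gt_of_ne hne with h | h
  · simpa [hp.1] using hq.2 p h
  · simpa [hq.1] using hp.2 q h

theorem exists_mem_firstTrueAt {y : ℕ → Bool} (hy : y ≠ fun _ => false) :
    ∃ p, y ∈ firstTrueAt p := by
  have h : ∃ n, y n = true := by
    by_contra! h
    exact hy (funext fun n => by simpa using h n)
  exact ⟨Nat.find h, Nat.find_spec h, fun i hi => by simpa using Nat.find_min h hi⟩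

theorem update_mem_firstTrueAt (p : ℕ) :
    Function.update (fun _ => false) p true ∈ firstTrueAt p :=
  ⟨by simp, fun i hi => by simp [hi.ne]⟩

end

section

variable {X : Type*} [TopologicalSpace X]

theorem exists_injective_denseRange [TopologicalSpace.SeparableSpace X] [T1Space X]
    [Infinite X] : ∃ ψ : ℕ → X, Function.Injective ψ ∧ DenseRange ψ := by
  obtain ⟨D, hDc, hD⟩ := TopologicalSpace.exists_countable_dense X
  have hDinf : D.Infinite := fun hfin =>
    infinite_univ (α := X) (hfin.isClosed.closure_eq.symm.trans hD.closure_eq ▸ hfin)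
  have := hDc.to_subtype
  have := hDinf.to_subtype
  obtain ⟨e⟩ := nonempty_equiv_of_countable (α := ℕ) (β := D)
  refine ⟨Subtype.val ∘ e, Subtype.val_injective.comp e.injective, ?_⟩
  rwa [DenseRange, range_comp, e.range_eq_univ, image_univ, Subtype.range_coe]

theorem DenseRange.exists_ge_mem [T1Space X] [PerfectSpace X] {ψ : ℕ → X} (hψ : DenseRange ψ)
    {V : Set X} (hV : IsOpen V) (hne : V.Nonempty) (q : ℕ) : ∃ p ≥ q, ψ p ∈ V := by
  obtain ⟨_, ⟨⟨p, rfl⟩, hpq⟩, hpV⟩ :=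
    (hψ.sdiff_finite ((finite_Iio q).image ψ)).exists_mem_open hV hne
  exact ⟨p, not_lt.1 fun h => hpq (mem_image_of_mem ψ h), hpV⟩

theorem exists_nonempty_interior_of_forall_mk_mem_iUnion_prod [BaireSpace X] [Nonempty X]
    {Y : Type*} {F : ℕ → Set X} {U : ℕ → Set Y} (hF : ∀ n, IsClosed (F n)) {y : Y}
    (h : ∀ x, (x, y) ∈ ⋃ n, F n ×ˢ U n) : ∃ n, y ∈ U n ∧ (interior (F n)).Nonempty := by
  have hcover : ⋃ n : {n // y ∈ U n}, F n = univ :=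
    eq_univ_of_forall fun x => by
      obtain ⟨n, hxF, hyU⟩ := mem_iUnion.1 (h x)
      exact mem_iUnion.2 ⟨⟨n, hyU⟩, hxF⟩
  obtain ⟨⟨n, hyU⟩, hint⟩ := nonempty_interior_of_iUnion_of_closed
    (f := fun n : {n // y ∈ U n} => F n) (fun n => hF n) hcover
  exact ⟨n, hyU, hint⟩

end

def cantorExample (ψ : ℕ → ℕ → Bool) : Set ((ℕ → Bool) × (ℕ → Bool)) :=
  univ ×ˢ {fun _ => false} ∪ ⋃ p, {ψ p}ᶜ ×ˢ firstTrueAt p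

theorem mk_const_false_mem_cantorExample (ψ : ℕ → ℕ → Bool) (x : ℕ → Bool) :
    (x, fun _ => false) ∈ cantorExample ψ :=
  Or.inl ⟨mem_univ x, rfl⟩

theorem setOf_mem_cantorExample (ψ : ℕ → ℕ → Bool) (x : ℕ → Bool) :
    {y | (x, y) ∈ cantorExample ψ} = ⋂ q ∈ ψ ⁻¹' {x}, (firstTrueAt q)ᶜ := by
  ext y
  simp only [cantorExample, mem_ofPred_eq, mem_union, mem_prod, mem_univ, true_and,
    mem_singleton_iff, mem_iUnion, mem_compl_iff, mem_iInter, mem_preimage]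
  by_cases hy : y = fun _ => false
  · subst hy
    simp [const_false_notMem_firstTrueAt]
  · obtain ⟨p, hp⟩ := exists_mem_firstTrueAt hy
    simp only [hy, false_or]
    constructor
    · rintro ⟨k, hxk, hk⟩ q rfl hq
      exact hxk (by rw [eq_of_mem_firstTrueAt hk hq])
    · exact fun h => ⟨p, fun hx => h p hx.symm hp, hp⟩

theorem isClopen_setOf_mem_cantorExample {ψ : ℕ → ℕ → Bool} (hψ : Function.Injective ψ)
    (x : ℕ → Bool) : IsClopen {y | (x, y) ∈ cantorExample ψ} := by
  rw [setOf_mem_cantorExample]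
  exact ((subsingleton_singleton.preimage hψ).finite).isClopen_biInter
    fun q _ => (isClopen_firstTrueAt q).compl

theorem mk_update_notMem_cantorExample (ψ : ℕ → ℕ → Bool) (p : ℕ) :
    (ψ p, Function.update (fun _ => false) p true) ∉ cantorExample ψ := by
  intro h
  have h' : Function.update (fun _ => false) p true ∈ {y | (ψ p, y) ∈ cantorExample ψ} := h
  rw [setOf_mem_cantorExample] at h'
  exact mem_iInter₂.1 h' p rfl (update_mem_firstTrueAt p)

theorem cantorExample_ne_iUnion_prod {ψ : ℕ → ℕ → Bool} (hψ : DenseRange ψ)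
    {F U : ℕ → Set (ℕ → Bool)} (hF : ∀ n, IsClosed (F n)) (hU : ∀ n, IsOpen (U n)) :
    cantorExample ψ ≠ ⋃ n, F n ×ˢ U n := by
  intro hE
  obtain ⟨n, hzero, hint⟩ := exists_nonempty_interior_of_forall_mk_mem_iUnion_prod hF
    fun x => hE ▸ mk_const_false_mem_cantorExample ψ x
  obtain ⟨q, hq⟩ := eventually_atTop.1 <|
    (tendsto_update_atTop _ fun _ => true).eventually_mem ((hU n).mem_nhds hzero)
  obtain ⟨p, hpq, hpF⟩ := hψ.exists_ge_mem isOpen_interior hint q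
  exact mk_update_notMem_cantorExample ψ p <|
    hE ▸ mem_iUnion.2 ⟨n, interior_subset hpF, hq p hpq⟩

/-- There is a subset `E` of `2^ω × 2^ω` which is the union of a closed set and an open set,
all of whose vertical sections are clopen, but which is not a countable union of rectangles
`F × U` with `F` closed and `U` open. -/
theorem exists_closedUnionOpen_clopenSections_not_sigmaClosedOpenRectangles :
    ∃ E : Set ((ℕ → Bool) × (ℕ → Bool)),
      (∃ (C U : Set ((ℕ → Bool) × (ℕ → Bool))), IsClosed C ∧ IsOpen U ∧ E = C ∪ U) ∧
      (∀ x : ℕ → Bool, IsClopen {y | (x, y) ∈ E}) ∧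
      ¬ (∃ (F : ℕ → Set (ℕ → Bool)) (U : ℕ → Set (ℕ → Bool)),
          (∀ n, IsClosed (F n)) ∧ (∀ n, IsOpen (U n)) ∧ E = ⋃ n, F n ×ˢ U n) := by
  obtain ⟨ψ, hψinj, hψdense⟩ := exists_injective_denseRange (X := ℕ → Bool)
  refine ⟨cantorExample ψ, ⟨_, _, isClosed_univ.prod isClosed_singleton,
      isOpen_iUnion fun p => isOpen_compl_singleton.prod (isClopen_firstTrueAt p).isOpen, rfl⟩,
    isClopen_setOf_mem_cantorExample hψinj, ?_⟩
  rintro ⟨F, U, hF, hU, hE⟩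
  exact cantorExample_ne_iUnion_prod hψdense hF hU hE
end
end
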